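/- Suppose the multiplication matrices A_1, ..., A_n pairwise commute. Then x = (λ_1, ..., λ_n) is a solution of the system x^α = Σ_{β∈I} a_{α,β} x^β (α ∈ J) if and only if (λ_1, ..., λ_n) is a joint eigenvalue tuple of (A_1, ..., A_n), i.e., there exists a nonzero vector v with A_i^T v = λ_i v for all i. -/

import Mathlib

open Finset Matrix

/-- Total degree of a multi-index. -/
def mdeg {n : ℕ} (α : Fin n → ℕ) : ℕ := ∑ i, α i

/-- The set `I = {α ∈ ℤ₊ⁿ : |α| ≤ m}` of multi-indices of total degree at most `m`. -/
def Idx (n m : ℕ) : Finset (Fin n → ℕ) :=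
  (Fintype.piFinset fun _ => Finset.range (m + 1)).filter fun α => mdeg α ≤ m

/-- `I` is a lower set of multi-indices. -/
def IsLower {n : ℕ} (I : Finset (Fin n → ℕ)) : Prop :=
  ∀ β ∈ I, ∀ γ : Fin n → ℕ, (∀ i, γ i ≤ β i) → γ ∈ I

/-- `α` belongs to the border `J` of the lower set `I`. -/
def InBorder {n : ℕ} (I : Finset (Fin n → ℕ)) (α : Fin n → ℕ) : Prop :=
  α ∉ I ∧ ∃ β ∈ I, ∃ i : Fin n, α = β + Pi.single i 1

/-- The multiplication matrix `A_i`: its row indexed by `β ∈ I` is the standard basis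
vector at `β + e_i` if `β + e_i ∈ I`, and is `(a_{β+e_i,γ})_{γ∈I}` otherwise. -/
def multMat {K : Type*} [Field K] {n : ℕ} (I : Finset (Fin n → ℕ))
    (a : (Fin n → ℕ) → (Fin n → ℕ) → K) (i : Fin n) : Matrix ↥I ↥I K :=
  fun β γ =>
    if (β : Fin n → ℕ) + Pi.single i 1 ∈ I then
      (if (γ : Fin n → ℕ) = (β : Fin n → ℕ) + Pi.single i 1 then 1 else 0)
    else a ((β : Fin n → ℕ) + Pi.single i 1) γ

/-- The monomial vector `v(x) = (x^β)_{β ∈ I}`. -/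
def monVec {K : Type*} [Field K] {n : ℕ} (I : Finset (Fin n → ℕ)) (x : Fin n → K) :
    ↥I → K :=
  fun β => ∏ i, x i ^ (β : Fin n → ℕ) i

/-- `x` is a solution of the system (1): `x^α = Σ_{β∈I} a_{α,β} x^β` for all `|α| = m+1`. -/
def IsSol {K : Type*} [Field K] {n : ℕ} (m : ℕ)
    (a : (Fin n → ℕ) → (Fin n → ℕ) → K) (x : Fin n → K) : Prop :=
  ∀ α : Fin n → ℕ, mdeg α = m + 1 →
    ∏ i, x i ^ α i = ∑ β ∈ Idx n m, a α β * ∏ i, x i ^ β i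

/-- `x` is a solution of the system for a general lower set `I` with border `J`. -/
def IsSolB {K : Type*} [Field K] {n : ℕ} (I : Finset (Fin n → ℕ))
    (a : (Fin n → ℕ) → (Fin n → ℕ) → K) (x : Fin n → K) : Prop :=
  ∀ α : Fin n → ℕ, InBorder I α →
    ∏ i, x i ^ α i = ∑ β ∈ I, a α β * ∏ i, x i ^ β i

/-- A square matrix is diagonalizable (semisimple). -/
def Diagonalizable {K : Type*} [Field K] {ι : Type*} [Fintype ι] [DecidableEq ι]
    (A : Matrix ι ι K) : Prop :=
  ∃ P : Matrix ι ι K, IsUnit P.det ∧ (P⁻¹ * A * P).IsDiag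

/-- The polynomial `P_α = x^α − Σ_{β∈I} a_{α,β} x^β`. -/
noncomputable def Pb {K : Type*} [Field K] {n : ℕ} (I : Finset (Fin n → ℕ))
    (a : (Fin n → ℕ) → (Fin n → ℕ) → K) (α : Fin n → ℕ) : MvPolynomial (Fin n) K :=
  MvPolynomial.monomial (Finsupp.equivFunOnFinite.symm α) 1 -
    ∑ β ∈ I, MvPolynomial.C (a α β) * MvPolynomial.monomial (Finsupp.equivFunOnFinite.symm β) 1

/-- The ideal generated by the polynomials `P_α`, `α ∈ J`. -/
noncomputable def PIdeal {K : Type*} [Field K] {n : ℕ} (I : Finset (Fin n → ℕ))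
    (a : (Fin n → ℕ) → (Fin n → ℕ) → K) : Ideal (MvPolynomial (Fin n) K) :=
  Ideal.span {p | ∃ α : Fin n → ℕ, InBorder I α ∧ p = Pb I a α}

/-!
A point `λ` solves the system iff the monomial vector `v(λ) = (λ^β)_{β ∈ I}` satisfies
`A_i v(λ) = λ_i v(λ)` for every `i`: row `β` of this equation is trivial when `β + e_i ∈ I`
and is the equation for `α = β + e_i ∈ J` otherwise. Since `I` is a lower set containing `0`,
the rows with `β + e_i ∈ I` force every joint eigenvector of the `A_i` for `λ` to be a
multiple of `v(λ)`.

It remains to pass to the transposes, which needs commutativity. If the commuting matrices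
`B_i = A_i - λ_i` have a common null vector, Nakayama's lemma over the commutative algebra they
generate, applied to the ideal `(B_1, …, B_n)`, shows that the ranges of the `B_i` do not span;
a linear form vanishing on them is a common null vector of the `B_iᵀ`.
-/

open scoped IsMulCommutative in
theorem Module.End.iSup_range_ne_top_of_commute {R V ι : Type*} [CommRing R] [AddCommGroup V]
    [Module R V] [Module.Finite R V] (f : ι → Module.End R V)
    (hf : ∀ i j, Commute (f i) (f j)) {v : V} (hv : v ≠ 0) (hfv : ∀ i, f i v = 0) :
    ⨆ i, LinearMap.range (f i) ≠ ⊤ := by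
  intro htop
  let A := Algebra.adjoin R (Set.range f)
  have : IsMulCommutative A := Algebra.isMulCommutative_adjoin R <| by
    rintro _ ⟨i, rfl⟩ _ ⟨j, rfl⟩
    exact hf i j
  let J : Ideal A := Ideal.span (Set.range fun i => ⟨f i, Algebra.subset_adjoin ⟨i, rfl⟩⟩)
  have : Module.Finite A V := Module.Finite.of_restrictScalars_finite R A V
  have hle : (⊤ : Submodule A V) ≤ J • ⊤ := by
    rintro w -
    have hw : w ∈ ⨆ i, LinearMap.range (f i) := htop ▸ Submodule.mem_top
    induction hw using Submodule.iSup_induction' with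
    | mem i x hx =>
      obtain ⟨u, rfl⟩ := hx
      exact Submodule.smul_mem_smul (Ideal.subset_span (Set.mem_range_self i)) Submodule.mem_top
    | zero => exact zero_mem _
    | add x y _ _ hx hy => exact add_mem hx hy
  obtain ⟨r, hr1, hr0⟩ :=
    Submodule.exists_sub_one_mem_and_smul_eq_zero_of_fg_of_le_smul J ⊤ Module.Finite.fg_top hle
  have hJv : ∀ s ∈ J, s • v = 0 := by
    intro s hs
    induction hs using Submodule.span_induction with
    | mem x hx => obtain ⟨i, rfl⟩ := hx; exact hfv i
    | zero => exact zero_smul _ _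
    | add x y _ _ hx hy => rw [add_smul, hx, hy, add_zero]
    | smul x y _ hy => rw [smul_eq_mul, mul_smul, hy, smul_zero]
  -- `r ≡ 1 mod J` kills `V`, while `J` kills `v`
  apply hv
  calc v = r • v - (r - 1) • v := by rw [sub_smul, one_smul, sub_sub_cancel]
    _ = 0 := by rw [hr0 v Submodule.mem_top, hJv _ hr1, sub_zero]

theorem Matrix.exists_transpose_mulVec_eq_zero_of_iSup_range_ne_top {K m ι : Type*} [Field K]
    [Fintype m] [DecidableEq m] (B : ι → Matrix m m K)
    (h : ⨆ i, LinearMap.range (B i).mulVecLin ≠ ⊤) :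
    ∃ w ≠ 0, ∀ i, (B i)ᵀ *ᵥ w = 0 := by
  obtain ⟨f, hf0, hf⟩ :=
    Submodule.exists_dual_map_eq_bot_of_lt_top (lt_top_iff_ne_top.2 h) inferInstance
  obtain ⟨w, rfl⟩ := (dotProductEquiv K m).surjective f
  refine ⟨w, by simpa using hf0, fun i => ?_⟩
  ext c
  have hc := Submodule.mem_map_of_mem (f := dotProductEquiv K m w) <|
    Submodule.mem_iSup_of_mem (p := fun i => LinearMap.range (B i).mulVecLin) i <|
      LinearMap.mem_range_self (B i).mulVecLin (Pi.single c 1)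
  rw [hf, Submodule.mem_bot, dotProductEquiv_apply_apply, mulVecLin_apply,
    mulVec_single_one] at hc
  rw [mulVec_transpose]
  exact hc

theorem Matrix.exists_transpose_mulVec_eq_smul_of_commute {K m ι : Type*} [Field K] [Fintype m]
    [DecidableEq m] (M : ι → Matrix m m K) (hM : ∀ i j, Commute (M i) (M j)) (lam : ι → K)
    (h : ∃ v ≠ 0, ∀ i, M i *ᵥ v = lam i • v) :
    ∃ w ≠ 0, ∀ i, (M i)ᵀ *ᵥ w = lam i • w := by
  obtain ⟨v, hv0, hv⟩ := h
  let B i := M i - lam i • (1 : Matrix m m K)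
  have hB : ∀ i j, Commute (B i) (B j) := fun i j =>
    ((hM i j).sub_right ((Commute.one_right _).smul_right _)).sub_left
      ((Commute.one_left _).smul_left _)
  have hBv : ∀ i, (B i).mulVecLin v = 0 := fun i => by simp [B, hv i]
  obtain ⟨w, hw0, hw⟩ := exists_transpose_mulVec_eq_zero_of_iSup_range_ne_top B <|
    Module.End.iSup_range_ne_top_of_commute (fun i => (B i).mulVecLin)
      (fun i j => (hB i j).map Matrix.toLinAlgEquiv') hv0 hBv
  refine ⟨w, hw0, fun i => ?_⟩
  simpa [B, sub_mulVec, smul_mulVec, sub_eq_zero] using hw i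

theorem Matrix.exists_transpose_mulVec_eq_smul_iff_of_commute {K m ι : Type*} [Field K]
    [Fintype m] [DecidableEq m] (M : ι → Matrix m m K) (hM : ∀ i j, Commute (M i) (M j))
    (lam : ι → K) :
    (∃ w ≠ 0, ∀ i, (M i)ᵀ *ᵥ w = lam i • w) ↔
      ∃ v ≠ 0, ∀ i, M i *ᵥ v = lam i • v := by
  refine ⟨fun h => ?_, exists_transpose_mulVec_eq_smul_of_commute M hM lam⟩
  simpa using exists_transpose_mulVec_eq_smul_of_commute (fun i => (M i)ᵀ)
    (fun i j => by simp only [Commute, SemiconjBy, ← transpose_mul, (hM j i).eq]) lam h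

theorem mdeg_add_single {n : ℕ} (β : Fin n → ℕ) (i : Fin n) :
    mdeg (β + Pi.single i 1) = mdeg β + 1 := by
  simp [mdeg, sum_add_distrib]

theorem eq_zero_of_mdeg_eq_zero {n : ℕ} {β : Fin n → ℕ} (h : mdeg β = 0) : β = 0 :=
  funext fun j => sum_eq_zero_iff.1 h j (mem_univ j)

theorem exists_eq_add_single_of_ne_zero {n : ℕ} {β : Fin n → ℕ} (h : β ≠ 0) :
    ∃ (β' : Fin n → ℕ) (i : Fin n), β = β' + Pi.single i 1 := by
  obtain ⟨i, hi⟩ := Function.ne_iff.1 h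
  refine ⟨β - Pi.single i 1, i, funext fun j => ?_⟩
  rcases eq_or_ne j i with rfl | hj
  · simp only [Pi.add_apply, Pi.sub_apply, Pi.single_eq_same]
    simp only [Pi.zero_apply] at hi
    omega
  · simp [Pi.single_eq_of_ne hj]

theorem prod_pow_add_single {M : Type*} [CommMonoid M] {n : ℕ} (x : Fin n → M)
    (β : Fin n → ℕ) (i : Fin n) :
    ∏ j, x j ^ (β + Pi.single i 1 : Fin n → ℕ) j = x i * ∏ j, x j ^ β j := by
  simp only [Pi.add_apply, pow_add, prod_mul_distrib, mul_comm (∏ j, x j ^ β j)]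
  congr 1
  rw [prod_eq_single i (fun j _ hj => by simp [Pi.single_eq_of_ne hj]) (by simp)]
  simp

section MultMat

variable {K : Type*} [Field K] {n : ℕ} {I : Finset (Fin n → ℕ)}
  {a : (Fin n → ℕ) → (Fin n → ℕ) → K}

theorem mulVec_multMat_of_mem {i : Fin n} {β : Fin n → ℕ} (hβ : β ∈ I)
    (h : β + Pi.single i 1 ∈ I) (w : I → K) :
    (multMat I a i *ᵥ w) ⟨β, hβ⟩ = w ⟨β + Pi.single i 1, h⟩ := by
  have hγ (γ : I) : (γ : Fin n → ℕ) = β + Pi.single i 1 ↔ γ = ⟨_, h⟩ := by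
    rw [Subtype.ext_iff]
  simp only [mulVec, dotProduct, multMat, if_pos h, ite_mul, one_mul, zero_mul, hγ,
    sum_ite_eq', mem_univ, if_true]

theorem mulVec_multMat_of_notMem {i : Fin n} {β : Fin n → ℕ} (hβ : β ∈ I)
    (h : β + Pi.single i 1 ∉ I) (w : I → K) :
    (multMat I a i *ᵥ w) ⟨β, hβ⟩ = ∑ γ : I, a (β + Pi.single i 1) γ * w γ := by
  simp only [mulVec, dotProduct, multMat, if_neg h]

theorem monVec_ne_zero (h0 : 0 ∈ I) (lam : Fin n → K) : monVec I lam ≠ 0 :=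
  fun h => by simpa [monVec] using congrFun h ⟨0, h0⟩

theorem mulVec_multMat_monVec_of_mem {i : Fin n} {β : Fin n → ℕ} (hβ : β ∈ I)
    (h : β + Pi.single i 1 ∈ I) (lam : Fin n → K) :
    (multMat I a i *ᵥ monVec I lam) ⟨β, hβ⟩ = lam i * monVec I lam ⟨β, hβ⟩ := by
  rw [mulVec_multMat_of_mem hβ h]
  exact prod_pow_add_single lam β i

theorem isSolB_iff_forall_mulVec_monVec (lam : Fin n → K) :
    IsSolB I a lam ↔ ∀ i, multMat I a i *ᵥ monVec I lam = lam i • monVec I lam := by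
  constructor
  · intro hsol i
    ext ⟨β, hβ⟩
    by_cases h : β + Pi.single i 1 ∈ I
    · exact mulVec_multMat_monVec_of_mem hβ h lam
    · rw [mulVec_multMat_of_notMem hβ h, Pi.smul_apply, smul_eq_mul, monVec,
        ← prod_pow_add_single, hsol _ ⟨h, β, hβ, i, rfl⟩]
      exact sum_coe_sort I fun γ => a (β + Pi.single i 1) γ * ∏ j, lam j ^ γ j
  · rintro heig _ ⟨h, β, hβ, i, rfl⟩
    have := congrFun (heig i) ⟨β, hβ⟩
    rw [mulVec_multMat_of_notMem hβ h, Pi.smul_apply, smul_eq_mul, monVec,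
      ← prod_pow_add_single] at this
    rw [← this]
    exact sum_coe_sort I fun γ => a (β + Pi.single i 1) γ * ∏ j, lam j ^ γ j

theorem eq_smul_monVec_of_forall_mulVec_multMat (hI : IsLower I) (h0 : 0 ∈ I)
    {lam : Fin n → K} {w : I → K} (hw : ∀ i, multMat I a i *ᵥ w = lam i • w) :
    w = w ⟨0, h0⟩ • monVec I lam := by
  suffices ∀ d, ∀ β (hβ : β ∈ I), mdeg β = d →
      w ⟨β, hβ⟩ = w ⟨0, h0⟩ * monVec I lam ⟨β, hβ⟩ from
    funext fun β => this _ β β.2 rfl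
  intro d
  induction d with
  | zero =>
    rintro β hβ hd
    obtain rfl := eq_zero_of_mdeg_eq_zero hd
    simp [monVec]
  | succ d ih =>
    rintro β hβ hd
    obtain ⟨β', i, rfl⟩ : ∃ β' i, β = β' + Pi.single i 1 :=
      exists_eq_add_single_of_ne_zero (by rintro rfl; simp [mdeg] at hd)
    have hβ' : β' ∈ I := hI _ hβ β' fun j => Nat.le_add_right _ _
    have hrow := congrFun (hw i) ⟨β', hβ'⟩
    rw [mulVec_multMat_of_mem hβ' hβ, Pi.smul_apply, smul_eq_mul] at hrow
    rw [hrow, ih β' hβ' (by rw [mdeg_add_single] at hd; omega), monVec, monVec,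
      prod_pow_add_single]
    ring

theorem exists_forall_mulVec_multMat_iff (hI : IsLower I) (h0 : 0 ∈ I) (lam : Fin n → K) :
    (∃ w ≠ 0, ∀ i, multMat I a i *ᵥ w = lam i • w) ↔
      ∀ i, multMat I a i *ᵥ monVec I lam = lam i • monVec I lam := by
  refine ⟨fun ⟨w, hw0, hw⟩ i => ?_, fun h => ⟨_, monVec_ne_zero h0 lam, h⟩⟩
  have hw' := hw i
  rw [eq_smul_monVec_of_forall_mulVec_multMat hI h0 hw, mulVec_smul, smul_comm] at hw'
  refine smul_right_injective _ (fun hc => hw0 ?_) hw'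
  rw [eq_smul_monVec_of_forall_mulVec_multMat hI h0 hw, hc, zero_smul]

end MultMat

theorem stmt_17_general {K : Type*} [Field K] {n : ℕ} (I : Finset (Fin n → ℕ))
    (hI : IsLower I) (h0 : (0 : Fin n → ℕ) ∈ I) (a : (Fin n → ℕ) → (Fin n → ℕ) → K)
    (hcomm : ∀ i j, multMat I a i * multMat I a j = multMat I a j * multMat I a i)
    (lam : Fin n → K) :
    IsSolB I a lam ↔
      ∃ v : ↥I → K, v ≠ 0 ∧ ∀ i, (multMat I a i)ᵀ *ᵥ v = lam i • v := by
  rw [isSolB_iff_forall_mulVec_monVec, ← exists_forall_mulVec_multMat_iff hI h0]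
  exact (exists_transpose_mulVec_eq_smul_iff_of_commute _ hcomm lam).symm

/-- For commuting multiplication matrices, `λ` is a solution of the system iff it is a
joint eigenvalue tuple of `(A_1, …, A_n)`, i.e. there is a nonzero `v` with
`A_iᵀ v = λ_i v` for all `i`. -/
theorem stmt_17 {K : Type*} [Field K] [IsAlgClosed K] {n : ℕ} (I : Finset (Fin n → ℕ))
    (hI : IsLower I) (h0 : (0 : Fin n → ℕ) ∈ I) (a : (Fin n → ℕ) → (Fin n → ℕ) → K)
    (hcomm : ∀ i j, multMat I a i * multMat I a j = multMat I a j * multMat I a i)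
    (lam : Fin n → K) :
    IsSolB I a lam ↔
      ∃ v : ↥I → K, v ≠ 0 ∧ ∀ i, (multMat I a i)ᵀ *ᵥ v = lam i • v :=
  stmt_17_general I hI h0 a hcomm lam
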